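/- Let M(φ, id) be a Mallows model on n elements with 0.5 ≤ φ < 1 and central ranking the identity permutation id. For any index i ∈ [n] and any parameter −0.2 < α < 0.2, the expectation over π ~ M(φ, id) of (1/φ)^{α·(v_π^{←}[i] − E[v_π^{←}[i]])} is at most e^{10α²}. -/

import Mathlib

/-!
Inserting the largest element at position `p` into a permutation of the smaller ones adds
`n - 1 - p` inversions and changes no other `v^←` entry. Hence `Z_n = [n]_φ Z_{n-1}` and, by
induction, `v^←[i]` has the truncated geometric law `P(k) ∝ φ^k` on `{0, …, i}`.

For that law, Jensen gives `E e^{t(X - EX)} ≤ E e^{-tX} E e^{tX} = G(φe^t) G(φe^{-t}) / G(φ)²`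
with `G(x) = ∑_{k ≤ i} x^k`. Since `G(x)(1 - x) = 1 - x^{i+1}` and
`(φe^t)^m (φe^{-t})^m = φ^{2m}`, AM-GM bounds this by `(1 - φ)² / ((1 - φe^t)(1 - φe^{-t}))`,
and for `t = α log(1/φ)` the estimates `e^t + e^{-t} - 2 ≤ 2t²` and
`log(1/φ) ≤ (1 - φ)/φ ≤ 1` make that at most `e^{10α²}`.
-/
open scoped Classical
open Finset

namespace Mallows

/-- Kendall-tau distance between two permutations of `Fin n`: the number of pairs of
elements whose relative order differs in the two permutations. -/
noncomputable def dKT {n : ℕ} (π σ : Equiv.Perm (Fin n)) : ℕ :=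
  (Finset.univ.filter (fun p : Fin n × Fin n =>
    p.1 < p.2 ∧ ¬((π.symm p.1 < π.symm p.2) ↔ (σ.symm p.1 < σ.symm p.2)))).card

/-- Probability mass function of the Mallows model `M(φ, π₀)`. -/
noncomputable def mallowsPMF {n : ℕ} (φ : ℝ) (π₀ π : Equiv.Perm (Fin n)) : ℝ :=
  φ ^ dKT π π₀ / ∑ σ : Equiv.Perm (Fin n), φ ^ dKT σ π₀

/-- Expectation of `f` under `M(φ, π₀)`. -/
noncomputable def mExp {n : ℕ} (φ : ℝ) (π₀ : Equiv.Perm (Fin n))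
    (f : Equiv.Perm (Fin n) → ℝ) : ℝ :=
  ∑ π : Equiv.Perm (Fin n), mallowsPMF φ π₀ π * f π

/-- Probability of the event `A` under `M(φ, π₀)`. -/
noncomputable def mProb {n : ℕ} (φ : ℝ) (π₀ : Equiv.Perm (Fin n))
    (A : Equiv.Perm (Fin n) → Prop) : ℝ :=
  ∑ π : Equiv.Perm (Fin n), if A π then mallowsPMF φ π₀ π else 0

/-- Total variation distance between two pmfs on permutations of `Fin n`. -/
noncomputable def tvDist {n : ℕ} (p q : Equiv.Perm (Fin n) → ℝ) : ℝ :=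
  (∑ π : Equiv.Perm (Fin n), |p π - q π|) / 2

/-- Kullback–Leibler divergence between two pmfs on permutations of `Fin n`. -/
noncomputable def klDiv {n : ℕ} (p q : Equiv.Perm (Fin n) → ℝ) : ℝ :=
  ∑ π : Equiv.Perm (Fin n), p π * Real.log (p π / q π)

/-- Position vector of a permutation: entry `i` is the position `π⁻¹ i` of element `i`. -/
noncomputable def posVec {n : ℕ} (π : Equiv.Perm (Fin n)) : EuclideanSpace ℝ (Fin n) :=
  WithLp.toLp 2 <| fun i => ((π.symm i).1 : ℝ)

/-- Front adjustment vector of `π` with respect to `π̂`: entry `i` counts the elements `j`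
with `π̂⁻¹ j < π̂⁻¹ i` and `π⁻¹ j > π⁻¹ i`. -/
noncomputable def leftAdj {n : ℕ} (πh π : Equiv.Perm (Fin n)) : EuclideanSpace ℝ (Fin n) :=
  WithLp.toLp 2 <| fun i => ((Finset.univ.filter (fun j : Fin n =>
    πh.symm j < πh.symm i ∧ π.symm i < π.symm j)).card : ℝ)

/-- Back adjustment vector of `π` with respect to `π̂`: entry `i` counts the elements `j`
with `π̂⁻¹ j > π̂⁻¹ i` and `π⁻¹ j < π⁻¹ i`. -/
noncomputable def rightAdj {n : ℕ} (πh π : Equiv.Perm (Fin n)) : EuclideanSpace ℝ (Fin n) :=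
  WithLp.toLp 2 <| fun i => ((Finset.univ.filter (fun j : Fin n =>
    πh.symm i < πh.symm j ∧ π.symm j < π.symm i)).card : ℝ)

end Mallows

section

open Real

lemma sum_fin_sub_eq_sum_range {M : Type*} [AddCommMonoid M] (f : ℕ → M) (n : ℕ) :
    ∑ p : Fin (n + 1), f (n - p) = ∑ k ∈ range (n + 1), f k := by
  rw [Fin.sum_univ_eq_sum_range (fun p => f (n - p)), ← sum_range_reflect]
  exact sum_congr rfl fun k hk => by
    rw [Nat.add_sub_cancel, Nat.sub_sub_self (Nat.le_of_lt_succ (mem_range.1 hk))]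

lemma centerMass_mul_sum_weights {ι : Type*} {s : Finset ι} {w : ι → ℝ} (z : ι → ℝ)
    (hw : ∑ i ∈ s, w i ≠ 0) :
    s.centerMass w z * ∑ i ∈ s, w i = ∑ i ∈ s, w i * z i := by
  rw [centerMass, smul_eq_mul, inv_mul_eq_div, div_mul_cancel₀ _ hw]
  simp_rw [smul_eq_mul]

lemma centerMass_exp_centered_le {ι : Type*} {s : Finset ι} {w : ι → ℝ}
    (hw : ∀ i ∈ s, 0 ≤ w i) (hs : 0 < ∑ i ∈ s, w i) (x : ι → ℝ) (t : ℝ) :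
    s.centerMass w (fun i => exp (t * (x i - s.centerMass w x))) ≤
      s.centerMass w (fun i => exp (-t * x i)) * s.centerMass w (fun i => exp (t * x i)) := by
  have shift : s.centerMass w (fun i => exp (t * (x i - s.centerMass w x))) =
      exp (-t * s.centerMass w x) * s.centerMass w (fun i => exp (t * x i)) := by
    rw [← smul_eq_mul, ← centerMass_smul]
    congr with i
    rw [smul_eq_mul, ← exp_add]
    ring_nf
  have jensen : exp (-t * s.centerMass w x) ≤ s.centerMass w (fun i => exp (-t * x i)) := by
    rw [← smul_eq_mul, ← centerMass_smul]
    exact convexOn_exp.map_centerMass_le hw hs fun _ _ => Set.mem_univ _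
  have nonneg : 0 ≤ s.centerMass w (fun i => exp (t * x i)) :=
    smul_nonneg (inv_nonneg.2 hs.le)
      (sum_nonneg fun i hi => mul_nonneg (hw i hi) (exp_pos _).le)
  rw [shift]
  exact mul_le_mul_of_nonneg_right jensen nonneg

lemma centerMass_pow_exp (φ t : ℝ) (M : ℕ) :
    (range M).centerMass (φ ^ ·) (fun k => exp (t * k)) =
      (∑ k ∈ range M, (φ * exp t) ^ k) / ∑ k ∈ range M, φ ^ k := by
  simp_rw [centerMass, smul_eq_mul, mul_pow, ← exp_nat_mul, mul_comm t, inv_mul_eq_div]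

lemma one_sub_mul_mul_one_sub_mul_inv_le {c u : ℝ} (hc : 0 ≤ c) (hu : 0 < u) :
    (1 - c * u) * (1 - c * u⁻¹) ≤ (1 - c) ^ 2 := by
  have two_le : 2 ≤ u + u⁻¹ := by
    have := sq_nonneg (u - 1)
    rw [← sub_nonneg, show u + u⁻¹ - 2 = (u - 1) ^ 2 / u by field_simp; ring]
    positivity
  nlinarith [mul_le_mul_of_nonneg_left two_le hc, mul_inv_cancel₀ hu.ne']

lemma geom_sum_mul_geom_sum_le {φ u : ℝ} (hφ : 0 ≤ φ) (hu : 0 < u) (M : ℕ) :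
    (∑ k ∈ range M, (φ * u) ^ k) * (∑ k ∈ range M, (φ * u⁻¹) ^ k) *
        ((1 - φ * u) * (1 - φ * u⁻¹)) ≤ ((∑ k ∈ range M, φ ^ k) * (1 - φ)) ^ 2 := by
  calc _ = (1 - φ ^ M * u ^ M) * (1 - φ ^ M * (u ^ M)⁻¹) := by
        rw [← mul_pow, ← inv_pow, ← mul_pow, ← geom_sum_mul_neg, ← geom_sum_mul_neg]; ring
    _ ≤ (1 - φ ^ M) ^ 2 := one_sub_mul_mul_one_sub_mul_inv_le (pow_nonneg hφ M) (pow_pos hu M)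
    _ = _ := by rw [geom_sum_mul_neg]

lemma exp_add_exp_neg_sub_two_le {t : ℝ} (ht : |t| ≤ 1) :
    exp t + exp (-t) - 2 ≤ 2 * t ^ 2 := by
  have hpos := abs_exp_sub_one_sub_id_le ht
  have hneg := abs_exp_sub_one_sub_id_le (show |-t| ≤ 1 by rwa [abs_neg])
  rw [neg_sq] at hneg
  linarith [le_abs_self (exp t - 1 - t), le_abs_self (exp (-t) - 1 - -t)]

lemma one_sub_four_mul_sq_mul_le_tilt {φ α : ℝ} (hφ0 : 1 / 2 ≤ φ) (hφ1 : φ < 1)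
    (hα : |α| ≤ 1) :
    (1 - 4 * α ^ 2) * (1 - φ) ^ 2 ≤
      (1 - φ * exp (log φ⁻¹ * α)) * (1 - φ * exp (-(log φ⁻¹ * α))) := by
  have hφ : 0 < φ := by linarith
  set L := log φ⁻¹
  set t := L * α
  have hL0 : 0 ≤ L := log_nonneg ((one_le_inv₀ hφ).2 hφ1.le)
  have hLφ : L * φ ≤ 1 - φ := by
    have := log_le_sub_one_of_pos (inv_pos.2 hφ)
    rwa [← le_div_iff₀ hφ, sub_div, div_self hφ.ne', one_div]
  have ht : |t| ≤ 1 := by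
    rw [abs_mul, abs_of_nonneg hL0]
    nlinarith [abs_nonneg α]
  have hcosh : φ * (exp t + exp (-t) - 2) ≤ 4 * α ^ 2 * (1 - φ) ^ 2 :=
    calc φ * (exp t + exp (-t) - 2) ≤ φ * (2 * t ^ 2) :=
          mul_le_mul_of_nonneg_left (exp_add_exp_neg_sub_two_le ht) hφ.le
      _ ≤ 2 * φ * (φ * (2 * t ^ 2)) := le_mul_of_one_le_left (by positivity) (by linarith)
      _ = 4 * α ^ 2 * (L * φ) ^ 2 := by ring
      _ ≤ 4 * α ^ 2 * (1 - φ) ^ 2 := by gcongr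
  have hexp : exp t * exp (-t) = 1 := by rw [← exp_add, add_neg_cancel, exp_zero]
  linear_combination hcosh - φ ^ 2 * hexp

lemma centerMass_geom_exp_centered_le {φ α : ℝ} (hφ0 : 1 / 2 ≤ φ) (hφ1 : φ < 1)
    (hα : |α| ≤ 1 / 5) {M : ℕ} (hM : M ≠ 0) :
    (range M).centerMass (φ ^ ·) (fun k =>
        exp (log φ⁻¹ * α * (k - (range M).centerMass (φ ^ ·) (fun k => (k : ℝ))))) ≤
      exp (10 * α ^ 2) := by
  have hφ : 0 < φ := by linarith
  set t := log φ⁻¹ * α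
  have hα2 : α ^ 2 ≤ 1 / 25 := by nlinarith [sq_abs α, abs_nonneg α]
  have htilt := one_sub_four_mul_sq_mul_le_tilt hφ0 hφ1 (hα.trans (by norm_num))
  rw [exp_neg] at htilt
  have htilt_pos : 0 < (1 - φ * exp t) * (1 - φ * (exp t)⁻¹) :=
    lt_of_lt_of_le (mul_pos (by linarith) (pow_pos (by linarith) 2)) htilt
  have hgeom : 0 < ∑ k ∈ range M, φ ^ k :=
    sum_pos (fun k _ => pow_pos hφ k) (nonempty_range_iff.2 hM)
  have hprod := geom_sum_mul_geom_sum_le hφ.le (exp_pos t) M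
  calc _ ≤ (range M).centerMass (φ ^ ·) (fun k => exp (-t * k)) *
        (range M).centerMass (φ ^ ·) (fun k => exp (t * k)) :=
        centerMass_exp_centered_le (fun k _ => pow_nonneg hφ.le k) hgeom _ t
    _ = (∑ k ∈ range M, (φ * exp t) ^ k) * (∑ k ∈ range M, (φ * (exp t)⁻¹) ^ k) /
          (∑ k ∈ range M, φ ^ k) ^ 2 := by
        rw [centerMass_pow_exp, centerMass_pow_exp, exp_neg]; ring
    _ ≤ (1 - φ) ^ 2 / ((1 - φ * exp t) * (1 - φ * (exp t)⁻¹)) := by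
        rw [div_le_div_iff₀ (by positivity) htilt_pos]
        linarith [hprod]
    _ ≤ exp (10 * α ^ 2) := by
        rw [div_le_iff₀ htilt_pos]
        calc (1 - φ) ^ 2 ≤ (1 + 10 * α ^ 2) * ((1 - 4 * α ^ 2) * (1 - φ) ^ 2) := by
              nlinarith [sq_nonneg (1 - φ), mul_nonneg (sq_nonneg α) (sq_nonneg (1 - φ))]
          _ ≤ exp (10 * α ^ 2) * ((1 - φ * exp t) * (1 - φ * (exp t)⁻¹)) :=
              mul_le_mul (by linarith [add_one_le_exp (10 * α ^ 2)]) htilt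
                (by nlinarith) (exp_pos _).le

end

namespace Mallows

section

variable {n : ℕ}

noncomputable def invCount (π : Equiv.Perm (Fin n)) (i : Fin n) : ℕ :=
  #{j | j < i ∧ π.symm i < π.symm j}

lemma leftAdj_one (π : Equiv.Perm (Fin n)) (i : Fin n) :
    leftAdj 1 π i = invCount π i :=
  rfl

lemma dKT_one (π : Equiv.Perm (Fin n)) : dKT π 1 = ∑ i, invCount π i := by
  have inverted : ∀ a b : Fin n,
      (a < b ∧ ¬((π.symm a < π.symm b) ↔ ((1 : Equiv.Perm (Fin n)).symm a <
        (1 : Equiv.Perm (Fin n)).symm b))) ↔ (a < b ∧ π.symm b < π.symm a) := by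
    intro a b
    have hne : a ≠ b → π.symm b ≠ π.symm a := fun h h' => h (π.symm.injective h').symm
    change (a < b ∧ ¬(π.symm a < π.symm b ↔ a < b)) ↔ _
    constructor
    · rintro ⟨hab, h⟩
      exact ⟨hab, lt_of_le_of_ne (not_lt.1 fun h' => h (iff_of_true h' hab)) (hne hab.ne)⟩
    · rintro ⟨hab, h⟩
      exact ⟨hab, fun h' => (h'.2 hab).asymm h⟩
  simp_rw [dKT, inverted]
  rw [card_filter, Fintype.sum_prod_type, sum_comm]
  refine sum_congr rfl fun b _ => ?_
  rw [invCount, card_filter]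

lemma invCount_last (π : Equiv.Perm (Fin (n + 1))) :
    invCount π (Fin.last n) = n - π.symm (Fin.last n) := by
  have above : invCount π (Fin.last n) = #{x | π.symm (Fin.last n) < x} := by
    refine card_equiv π.symm fun j => ?_
    simp only [mem_filter, mem_univ, true_and, and_iff_right_iff_imp]
    rintro h
    exact lt_of_le_of_ne (Fin.le_last j) (by rintro rfl; exact h.false)
  rw [above, filter_lt_eq_Ioi, Fin.card_Ioi]
  omega

/-- `insertLast p σ` puts the largest element at position `p` and the others in the relative
order given by `σ`. -/
noncomputable def insertLast (p : Fin (n + 1)) (σ : Equiv.Perm (Fin n)) :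
    Equiv.Perm (Fin (n + 1)) :=
  ((finSuccEquiv' p).trans (Equiv.optionCongr σ)).trans finSuccEquivLast.symm

@[simp] lemma insertLast_symm_last (p : Fin (n + 1)) (σ : Equiv.Perm (Fin n)) :
    (insertLast p σ).symm (Fin.last n) = p := by
  simp [insertLast, ← Equiv.optionCongr_symm]

@[simp] lemma insertLast_symm_castSucc (p : Fin (n + 1)) (σ : Equiv.Perm (Fin n))
    (i : Fin n) : (insertLast p σ).symm i.castSucc = p.succAbove (σ.symm i) := by
  simp [insertLast, ← Equiv.optionCongr_symm]

@[simp] lemma insertLast_succAbove (p : Fin (n + 1)) (σ : Equiv.Perm (Fin n))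
    (j : Fin n) : insertLast p σ (p.succAbove j) = (σ j).castSucc := by
  simp [insertLast]

lemma insertLast_bijective :
    Function.Bijective (fun x : Fin (n + 1) × Equiv.Perm (Fin n) => insertLast x.1 x.2) := by
  rw [Fintype.bijective_iff_injective_and_card]
  refine ⟨?_, by simp [Fintype.card_perm, Nat.factorial_succ]⟩
  rintro ⟨p, σ⟩ ⟨q, τ⟩ h
  obtain rfl : p = q := by
    simpa using congrArg (fun e : Equiv.Perm (Fin (n + 1)) => e.symm (Fin.last n)) h
  obtain rfl : σ = τ := Equiv.ext fun j => by
    simpa using congrArg (fun e : Equiv.Perm (Fin (n + 1)) => e (p.succAbove j)) h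
  rfl

lemma sum_perm_succ {M : Type*} [AddCommMonoid M] (f : Equiv.Perm (Fin (n + 1)) → M) :
    ∑ π, f π = ∑ p : Fin (n + 1), ∑ σ : Equiv.Perm (Fin n), f (insertLast p σ) := by
  rw [← Fintype.sum_prod_type', Fintype.sum_bijective _ insertLast_bijective _ f fun _ => rfl]

lemma invCount_insertLast_castSucc (p : Fin (n + 1)) (σ : Equiv.Perm (Fin n))
    (i : Fin n) : invCount (insertLast p σ) i.castSucc = invCount σ i := by
  rw [invCount, invCount, card_filter, card_filter, Fin.sum_univ_castSucc]
  simp [Fin.succAbove_lt_succAbove_iff, (Fin.castSucc_lt_last i).not_gt]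

lemma dKT_insertLast (p : Fin (n + 1)) (σ : Equiv.Perm (Fin n)) :
    dKT (insertLast p σ) 1 = dKT σ 1 + (n - p) := by
  rw [dKT_one, dKT_one, Fin.sum_univ_castSucc, invCount_last]
  simp [invCount_insertLast_castSucc]

lemma sum_pow_dKT_succ (φ : ℝ) (F : Equiv.Perm (Fin (n + 1)) → ℝ) :
    ∑ π, φ ^ dKT π 1 * F π =
      ∑ p : Fin (n + 1), φ ^ (n - p : ℕ) * ∑ σ, φ ^ dKT σ 1 * F (insertLast p σ) := by
  rw [sum_perm_succ]
  simp_rw [dKT_insertLast, pow_add, mul_sum]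
  exact sum_congr rfl fun _ _ => sum_congr rfl fun _ _ => by ring

lemma sum_pow_dKT_mul_invCount {φ : ℝ} (hφ : 0 < φ) (g : ℕ → ℝ) (i : Fin n) :
    ∑ π : Equiv.Perm (Fin n), φ ^ dKT π 1 * g (invCount π i) =
      (range (i + 1)).centerMass (φ ^ ·) (fun k => g k) *
        ∑ π : Equiv.Perm (Fin n), φ ^ dKT π 1 := by
  have geom_ne : ∀ m, ∑ k ∈ range (m + 1), φ ^ k ≠ 0 := fun m =>
    (sum_pos (fun k _ => pow_pos hφ k) nonempty_range_add_one).ne'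
  have partition_succ : ∀ m, ∑ π : Equiv.Perm (Fin (m + 1)), φ ^ dKT π 1 =
      (∑ k ∈ range (m + 1), φ ^ k) * ∑ σ : Equiv.Perm (Fin m), φ ^ dKT σ 1 := fun m => by
    simpa [← sum_mul, sum_fin_sub_eq_sum_range (φ ^ ·)] using sum_pow_dKT_succ φ (fun _ => 1)
  induction n with
  | zero => exact i.elim0
  | succ n ih =>
    rw [sum_pow_dKT_succ, partition_succ, ← mul_assoc]
    induction i using Fin.lastCases with
    | last =>
      simp only [invCount_last, insertLast_symm_last, Fin.val_last,
        centerMass_mul_sum_weights _ (geom_ne n)]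
      rw [← sum_fin_sub_eq_sum_range (fun k => φ ^ k * g k), sum_mul]
      exact sum_congr rfl fun _ _ => by rw [← sum_mul]; ring
    | cast i =>
      simp only [invCount_insertLast_castSucc, ih, ← sum_mul,
        sum_fin_sub_eq_sum_range (φ ^ ·), Fin.val_castSucc]
      ring

lemma mExp_comp_invCount {φ : ℝ} (hφ : 0 < φ) (i : Fin n) (g : ℕ → ℝ) :
    mExp φ 1 (fun π => g (invCount π i)) =
      (range (i + 1)).centerMass (φ ^ ·) (fun k => g k) := by
  have hZ : 0 < ∑ π : Equiv.Perm (Fin n), φ ^ dKT π 1 :=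
    sum_pos (fun _ _ => pow_pos hφ _) univ_nonempty
  simp only [mExp, mallowsPMF, div_mul_eq_mul_div, ← sum_div, sum_pow_dKT_mul_invCount hφ,
    mul_div_cancel_right₀ _ hZ.ne']

end

/-- Moment generating function bound. For `0.5 ≤ φ < 1`, any `i` and
`-0.2 < α < 0.2`, the expectation of `(1/φ)^{α (v_π^{←}[i] - E[v_π^{←}[i]])}` under
`M(φ, id)` is at most `e^{10 α²}`. -/
theorem mgf_bound (n : ℕ) (φ : ℝ) (hφ0 : 0.5 ≤ φ) (hφ1 : φ < 1) (i : Fin n)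
    (α : ℝ) (hα0 : -0.2 < α) (hα1 : α < 0.2) :
    mExp φ 1 (fun π =>
        (1 / φ) ^ (α * (leftAdj 1 π i - mExp φ 1 (fun π' => leftAdj 1 π' i)))) ≤
      Real.exp (10 * α ^ 2) := by
  have hφhalf : 1 / 2 ≤ φ := by norm_num at hφ0 ⊢; exact hφ0
  have hφpos : 0 < φ := by linarith
  have hα : |α| ≤ 1 / 5 :=
    abs_le.2 ⟨by norm_num at hα0 ⊢; linarith, by norm_num at hα1 ⊢; linarith⟩
  set μ := (range (i + 1)).centerMass (φ ^ ·) (fun k => (k : ℝ))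
  have hmean : mExp φ 1 (fun π => leftAdj 1 π i) = μ :=
    mExp_comp_invCount hφpos i (fun k => (k : ℝ))
  have hrpow : ∀ x : ℝ, (1 / φ) ^ x = Real.exp (Real.log φ⁻¹ * x) := fun x => by
    rw [one_div, Real.rpow_def_of_pos (by positivity)]
  simp_rw [hmean, leftAdj_one, hrpow, ← mul_assoc]
  rw [mExp_comp_invCount hφpos i fun k => Real.exp (Real.log φ⁻¹ * α * (k - μ))]
  exact centerMass_geom_exp_centered_le hφhalf hφ1 hα i.val.succ_ne_zero

end Mallows
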